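/- Tracking with forced exploration: Let K ≥ 1 and let (w̃(t))_{t≥1} be vectors in Σ_K with w̃(t) = π for 1 ≤ t ≤ K. Set γ_t = 1/(4√t), define w'(t) = π for 1 ≤ t ≤ K and w'(t+1) = (1 − γ_t)·w̃(t+1) + γ_t·π for t ≥ K, and let (A_t)_{t≥1} follow the tracking rule: A_s = s for 1 ≤ s ≤ K and, for t ≥ K, A_{t+1} is any element of argmax_{a∈{1,…,K}} ( Σ_{s=1}^{t+1} w'_a(s) − N_a(t) ), where N_a(t) = #{1 ≤ s ≤ t : A_s = a}. Then for every t ≥ 1: max_a |Σ_{s=1}^t w̃_a(s) − N_a(t)| ≤ 2K√t, and N_a(t) ≥ √t/(4K) − 2K for every a ∈ {1,…,K}. -/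

import Mathlib

/-- Number of draws of arm `a` up to and including time `t`. -/
def Ncount {K : ℕ} (A : ℕ → Fin K) (a : Fin K) (t : ℕ) : ℕ :=
  ((Finset.Icc 1 t).filter fun s => A s = a).card

/-!
Let `D_a(t) = ∑_{s ≤ t} w'_a(s) - N_a(t)`. Since every `w'(s)` is a probability vector,
`∑_a D_a(t) = 0`. During the forced phase each arm is drawn at most once, so `D_a(t) ≥ -1`; after it,
the tracked arm maximises `D_b(t) + w'_b(t + 1)`, whose sum over `b` is `1`, so drawing it keeps its
deviation `≥ -1`, while the deviation of the other arms can only grow. As the deviations sum to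
zero, also `D_a(t) ≤ K - 1`, hence `|D_a(t)| ≤ K`.

The mixing rate at time `s` lies between `1 / (4√s)` and `1 / (2√s)`, so `|w̃_a(s) - w'_a(s)|` is at
most `1 / (2√s)`, which sums to at most `√t`, and `w'_a(s) ≥ 1 / (4K√s) ≥ 1 / (4K√t)` for `s ≤ t`,
which sums to at least `√t / (4K)`. Both claims follow by comparing `N_a(t)` with `∑ w'_a`.
-/

open Finset

section Counting

variable {K : ℕ} (A : ℕ → Fin K)

lemma Ncount_succ (a : Fin K) (t : ℕ) :
    Ncount A a (t + 1) = Ncount A a t + if A (t + 1) = a then 1 else 0 := by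
  simp only [Ncount, card_filter]
  exact sum_Icc_succ_top (by omega) _

lemma sum_Ncount (t : ℕ) : ∑ a, Ncount A a t = t := by
  unfold Ncount
  rw [← card_eq_sum_card_fiberwise fun s _ => mem_univ (A s)]
  simp

lemma Ncount_le_one {t : ℕ} (hA : Set.InjOn A (Set.Icc 1 t)) (a : Fin K) : Ncount A a t ≤ 1 := by
  refine card_le_one.2 fun x hx y hy => hA ?_ ?_ ?_ <;> simp_all

lemma injOn_Icc_of_forced (hA : ∀ s, 1 ≤ s → s ≤ K → (A s : ℕ) = s - 1) :
    Set.InjOn A (Set.Icc 1 K) := fun x ⟨hx, hxK⟩ y ⟨hy, hyK⟩ hxy => by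
  have := hA x hx hxK
  rw [hxy, hA y hy hyK] at this
  omega

end Counting

lemma nonneg_of_forall_le_of_sum_nonneg {ι : Type*} [Fintype ι] {f : ι → ℝ}
    (hsum : 0 ≤ ∑ j, f j) {i : ι} (hi : ∀ j, f j ≤ f i) : 0 ≤ f i := by
  obtain ⟨j, -, hj⟩ := exists_le_of_sum_le ⟨i, mem_univ i⟩ (g := f) (f := 0) (by simpa using hsum)
  exact hj.trans (hi j)

lemma le_card_sub_one_of_sum_eq_zero {ι : Type*} [Fintype ι] [DecidableEq ι] {f : ι → ℝ}
    (hsum : ∑ j, f j = 0) (hf : ∀ j, -1 ≤ f j) (i : ι) : f i ≤ Fintype.card ι - 1 := by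
  have hrest := card_nsmul_le_sum (univ.erase i) f (-1) fun j _ => hf j
  rw [card_erase_of_mem (mem_univ i), card_univ, nsmul_eq_mul,
    Nat.cast_sub (Fintype.card_pos_iff.2 ⟨i⟩)] at hrest
  have := add_sum_erase univ f (mem_univ i)
  push_cast at hrest
  linarith

def deviation {K : ℕ} (w : ℕ → Fin K → ℝ) (A : ℕ → Fin K) (a : Fin K) (t : ℕ) : ℝ :=
  ∑ s ∈ Icc 1 t, w s a - Ncount A a t

def IsTrackingRule {K : ℕ} (w : ℕ → Fin K → ℝ) (A : ℕ → Fin K) : Prop :=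
  ∀ t, K ≤ t → ∀ b : Fin K,
    (∑ s ∈ Icc 1 (t + 1), w s b) - (Ncount A b t : ℝ) ≤
      (∑ s ∈ Icc 1 (t + 1), w s (A (t + 1))) - (Ncount A (A (t + 1)) t : ℝ)

section Tracking

variable {K : ℕ} {w : ℕ → Fin K → ℝ} {A : ℕ → Fin K}

lemma deviation_succ (a : Fin K) (t : ℕ) :
    deviation w A a (t + 1) = deviation w A a t + w (t + 1) a - if A (t + 1) = a then 1 else 0 := by
  simp only [deviation, sum_Icc_succ_top (show 1 ≤ t + 1 by omega), Ncount_succ]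
  push_cast
  ring

lemma sum_deviation (hw : ∀ s, 1 ≤ s → w s ∈ stdSimplex ℝ (Fin K)) (t : ℕ) :
    ∑ a, deviation w A a t = 0 := by
  simp only [deviation]
  rw [sum_sub_distrib, sum_comm, sum_congr rfl fun s hs => (hw s (mem_Icc.1 hs).1).2,
    ← Nat.cast_sum, sum_Ncount]
  simp

theorem neg_one_le_deviation (hw : ∀ s, 1 ≤ s → w s ∈ stdSimplex ℝ (Fin K))
    (hforced : Set.InjOn A (Set.Icc 1 K)) (htrack : IsTrackingRule w A) (t : ℕ) (a : Fin K) :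
    -1 ≤ deviation w A a t := by
  induction t generalizing a with
  | zero => simp [deviation, Ncount]
  | succ t ih =>
    rcases lt_or_ge t K with htK | hKt
    · have hN : (Ncount A a (t + 1) : ℝ) ≤ 1 := by
        exact_mod_cast Ncount_le_one A (hforced.mono (Set.Icc_subset_Icc_right htK)) a
      have hW : 0 ≤ ∑ s ∈ Icc 1 (t + 1), w s a :=
        sum_nonneg fun s hs => (hw s (mem_Icc.1 hs).1).1 a
      rw [deviation]
      linarith
    · have hE : ∀ b, (∑ s ∈ Icc 1 (t + 1), w s b) - (Ncount A b t : ℝ)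
          = deviation w A b t + w (t + 1) b := fun b => by
        rw [deviation, sum_Icc_succ_top (by omega)]
        ring
      have hmax : ∀ b, deviation w A b t + w (t + 1) b
          ≤ deviation w A (A (t + 1)) t + w (t + 1) (A (t + 1)) := fun b => by
        rw [← hE, ← hE]
        exact htrack t hKt b
      rw [deviation_succ]
      by_cases ha : A (t + 1) = a
      · subst ha
        have : 0 ≤ deviation w A (A (t + 1)) t + w (t + 1) (A (t + 1)) := by
          refine nonneg_of_forall_le_of_sum_nonneg
            (f := fun b => deviation w A b t + w (t + 1) b) ?_ hmax
          rw [sum_add_distrib, sum_deviation hw, (hw (t + 1) (by omega)).2]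
          norm_num
        simp only [if_true]
        linarith
      · simp only [ha, if_false]
        linarith [ih a, (hw (t + 1) (by omega)).1 a]

theorem abs_deviation_le (hw : ∀ s, 1 ≤ s → w s ∈ stdSimplex ℝ (Fin K))
    (hforced : Set.InjOn A (Set.Icc 1 K)) (htrack : IsTrackingRule w A) (t : ℕ) (a : Fin K) :
    |deviation w A a t| ≤ K := by
  have hlow := neg_one_le_deviation hw hforced htrack t
  have hup := le_card_sub_one_of_sum_eq_zero (sum_deviation hw t) hlow a
  have hK : (1 : ℝ) ≤ K := Nat.one_le_cast.2 a.pos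
  rw [Fintype.card_fin] at hup
  exact abs_le.2 ⟨by linarith [hlow a], by linarith⟩

end Tracking

section SquareRoots

lemma one_div_two_sqrt_add_one_le {x : ℝ} (hx : 0 ≤ x) :
    1 / (2 * √(x + 1)) ≤ √(x + 1) - √x := by
  have hx₁ : 0 < √(x + 1) := Real.sqrt_pos.2 (by linarith)
  have hle : √x ≤ √(x + 1) := Real.sqrt_le_sqrt (by linarith)
  rw [div_le_iff₀ (by positivity)]
  nlinarith [Real.sq_sqrt hx, Real.sq_sqrt (show 0 ≤ x + 1 by linarith)]

lemma one_div_four_sqrt_le {x : ℝ} (hx : 1 ≤ x) : 1 / (4 * √x) ≤ 1 / (2 * √(x + 1)) := by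
  have hx₀ : 0 < √x := Real.sqrt_pos.2 (by linarith)
  rw [div_le_div_iff₀ (by positivity) (by positivity), one_mul, one_mul]
  nlinarith [Real.sq_sqrt (show 0 ≤ x by linarith), Real.sq_sqrt (show 0 ≤ x + 1 by linarith),
    Real.sqrt_nonneg (x + 1)]

lemma one_div_two_sqrt_le_one {x : ℝ} (hx : 1 ≤ x) : 1 / (2 * √x) ≤ 1 := by
  have := Real.one_le_sqrt.2 hx
  rw [div_le_one (by positivity)]
  linarith

lemma sum_one_div_two_sqrt_le (n : ℕ) : ∑ s ∈ Icc 1 n, 1 / (2 * √s) ≤ √n := by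
  induction n with
  | zero => simp
  | succ n ih =>
    rw [sum_Icc_succ_top (by omega)]
    have := one_div_two_sqrt_add_one_le (Nat.cast_nonneg (α := ℝ) n)
    push_cast
    linarith

lemma abs_sum_le_sqrt {f : ℕ → ℝ} {n : ℕ} (hf : ∀ s ∈ Icc 1 n, |f s| ≤ 1 / (2 * √s)) :
    |∑ s ∈ Icc 1 n, f s| ≤ √n :=
  (abs_sum_le_sum_abs _ _).trans ((sum_le_sum hf).trans (sum_one_div_two_sqrt_le n))

lemma mul_sqrt_le_sum {f : ℕ → ℝ} {c : ℝ} {n : ℕ} (hc : 0 ≤ c)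
    (hf : ∀ s ∈ Icc 1 n, c / √s ≤ f s) : c * √n ≤ ∑ s ∈ Icc 1 n, f s := by
  calc c * √n = ∑ s ∈ Icc 1 n, c / √n := by
        rw [sum_const, Nat.card_Icc, add_tsub_cancel_right, nsmul_eq_mul, mul_div_left_comm,
          Real.div_sqrt, mul_comm]
    _ ≤ ∑ s ∈ Icc 1 n, c / √s := sum_le_sum fun s hs => by
        have hs := mem_Icc.1 hs
        exact div_le_div_of_nonneg_left hc (Real.sqrt_pos.2 (by exact_mod_cast hs.1))
          (Real.sqrt_le_sqrt (by exact_mod_cast hs.2))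
    _ ≤ ∑ s ∈ Icc 1 n, f s := sum_le_sum hf

end SquareRoots

section Mixing

variable {K : ℕ}

noncomputable def mixUniform (γ : ℝ) (p : Fin K → ℝ) : Fin K → ℝ :=
  fun a => (1 - γ) * p a + γ * ((1 : ℝ) / K)

lemma mixUniform_uniform (γ : ℝ) :
    mixUniform γ (fun _ : Fin K => (1 : ℝ) / K) = fun _ => (1 : ℝ) / K := by
  funext a
  simp only [mixUniform]
  ring

variable {γ : ℝ} {p : Fin K → ℝ}

lemma mixUniform_mem_stdSimplex (hK : 1 ≤ K) (hγ₀ : 0 ≤ γ) (hγ₁ : γ ≤ 1)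
    (hp : p ∈ stdSimplex ℝ (Fin K)) : mixUniform γ p ∈ stdSimplex ℝ (Fin K) := by
  refine ⟨fun a => add_nonneg (mul_nonneg (by linarith) (hp.1 a)) (by positivity), ?_⟩
  have hK' : (K : ℝ) ≠ 0 := by positivity
  simp only [mixUniform, sum_add_distrib, ← mul_sum, hp.2, sum_const, card_univ,
    Fintype.card_fin, nsmul_eq_mul]
  field_simp
  ring

lemma abs_sub_mixUniform_le (hγ₀ : 0 ≤ γ) (hp : p ∈ stdSimplex ℝ (Fin K)) (a : Fin K) :
    |p a - mixUniform γ p a| ≤ γ := by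
  have hpa := mem_Icc_of_mem_stdSimplex hp a
  have hπ : (1 : ℝ) / K ≤ 1 := by simpa using Nat.cast_inv_le_one (α := ℝ) K
  have hπ₀ : (0 : ℝ) ≤ 1 / K := by positivity
  have : |p a - 1 / K| ≤ 1 := abs_le.2 ⟨by linarith [hpa.1], by linarith [hpa.2]⟩
  calc |p a - mixUniform γ p a| = γ * |p a - 1 / K| := by
        rw [mixUniform, show p a - ((1 - γ) * p a + γ * (1 / K)) = γ * (p a - 1 / K) by ring,
          abs_mul, abs_of_nonneg hγ₀]
    _ ≤ γ := mul_le_of_le_one_right hγ₀ this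

lemma div_le_mixUniform (hγ₁ : γ ≤ 1) (hp : p ∈ stdSimplex ℝ (Fin K)) (a : Fin K) :
    γ / K ≤ mixUniform γ p a := by
  have := mul_nonneg (sub_nonneg.2 hγ₁) (hp.1 a)
  rw [mixUniform, mul_one_div]
  linarith

/-- The rate is left existential so that the forced phase, where `wt s` is already uniform and any
rate describes `w' s`, and the recursion, with rate `1 / (4√(s - 1))`, are treated alike. -/
def IsExplorationMixture (wt w' : ℕ → Fin K → ℝ) : Prop :=
  ∀ s : ℕ, 1 ≤ s → ∃ γ, 1 / (4 * √s) ≤ γ ∧ γ ≤ 1 / (2 * √s) ∧ w' s = mixUniform γ (wt s)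

lemma isExplorationMixture_of_rec (hK : 1 ≤ K) {wt w' : ℕ → Fin K → ℝ}
    (hwtinit : ∀ t, 1 ≤ t → t ≤ K → wt t = fun _ => (1 : ℝ) / K)
    (hw'init : ∀ t, 1 ≤ t → t ≤ K → w' t = fun _ => (1 : ℝ) / K)
    (hw'rec : ∀ t, K ≤ t → w' (t + 1) = mixUniform (1 / (4 * √t)) (wt (t + 1))) :
    IsExplorationMixture wt w' := by
  intro s hs
  rcases le_or_gt s K with hsK | hKs
  · have hs' : 0 < √s := Real.sqrt_pos.2 (by exact_mod_cast hs)
    refine ⟨1 / (4 * √s), le_rfl, by gcongr; norm_num, ?_⟩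
    rw [hw'init s hs hsK, hwtinit s hs hsK, mixUniform_uniform]
  · obtain ⟨u, rfl⟩ : ∃ u, s = u + 1 := ⟨s - 1, by omega⟩
    have hu : (1 : ℝ) ≤ u := by exact_mod_cast (show 1 ≤ u by omega)
    have hu' : 0 < √u := Real.sqrt_pos.2 (by linarith)
    refine ⟨1 / (4 * √u), ?_, ?_, hw'rec u (by omega)⟩
    · push_cast
      gcongr
      linarith
    · push_cast
      exact one_div_four_sqrt_le hu

namespace IsExplorationMixture

variable {wt w' : ℕ → Fin K → ℝ} {s : ℕ}

lemma mem_stdSimplex (hmix : IsExplorationMixture wt w') (hK : 1 ≤ K) (hs : 1 ≤ s)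
    (hwt : wt s ∈ stdSimplex ℝ (Fin K)) : w' s ∈ stdSimplex ℝ (Fin K) := by
  obtain ⟨γ, hγ₀, hγ₁, h⟩ := hmix s hs
  rw [h]
  exact mixUniform_mem_stdSimplex hK (le_trans (by positivity) hγ₀)
    (hγ₁.trans (one_div_two_sqrt_le_one (by exact_mod_cast hs))) hwt

lemma abs_sub_le (hmix : IsExplorationMixture wt w') (hs : 1 ≤ s)
    (hwt : wt s ∈ stdSimplex ℝ (Fin K)) (a : Fin K) : |wt s a - w' s a| ≤ 1 / (2 * √s) := by
  obtain ⟨γ, hγ₀, hγ₁, h⟩ := hmix s hs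
  rw [h]
  exact (abs_sub_mixUniform_le (le_trans (by positivity) hγ₀) hwt a).trans hγ₁

lemma div_le (hmix : IsExplorationMixture wt w') (hs : 1 ≤ s)
    (hwt : wt s ∈ stdSimplex ℝ (Fin K)) (a : Fin K) : 1 / (4 * K) / √s ≤ w' s a := by
  obtain ⟨γ, hγ₀, hγ₁, h⟩ := hmix s hs
  rw [h]
  calc 1 / (4 * K) / √s = 1 / (4 * √s) / K := by ring
    _ ≤ γ / K := by gcongr
    _ ≤ _ := div_le_mixUniform (hγ₁.trans (one_div_two_sqrt_le_one (by exact_mod_cast hs))) hwt a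

end IsExplorationMixture

end Mixing

/-- tracking with forced exploration. -/
theorem stmt5 (K : ℕ) (hK : 1 ≤ K)
    (wt : ℕ → Fin K → ℝ) (hwt : ∀ t, 1 ≤ t → wt t ∈ stdSimplex ℝ (Fin K))
    (hwtinit : ∀ t, 1 ≤ t → t ≤ K → wt t = fun _ => (1 : ℝ) / K)
    (w' : ℕ → Fin K → ℝ)
    (hw'init : ∀ t, 1 ≤ t → t ≤ K → w' t = fun _ => (1 : ℝ) / K)
    (hw'rec : ∀ t, K ≤ t → w' (t + 1) = fun a =>
      (1 - 1 / (4 * Real.sqrt t)) * wt (t + 1) a + (1 / (4 * Real.sqrt t)) * ((1 : ℝ) / K))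
    (A : ℕ → Fin K)
    (hA0 : ∀ s, 1 ≤ s → s ≤ K → (A s : ℕ) = s - 1)
    (htrack : ∀ t, K ≤ t → ∀ b : Fin K,
      (∑ s ∈ Finset.Icc 1 (t + 1), w' s b) - (Ncount A b t : ℝ) ≤
        (∑ s ∈ Finset.Icc 1 (t + 1), w' s (A (t + 1))) - (Ncount A (A (t + 1)) t : ℝ)) :
    ∀ t, 1 ≤ t →
      (∀ a : Fin K, |(∑ s ∈ Finset.Icc 1 t, wt s a) - (Ncount A a t : ℝ)| ≤
          2 * K * Real.sqrt t) ∧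
      ∀ a : Fin K, Real.sqrt t / (4 * K) - 2 * K ≤ (Ncount A a t : ℝ) := by
  have hmix := isExplorationMixture_of_rec hK hwtinit hw'init hw'rec
  have hdev := abs_deviation_le (fun s hs => hmix.mem_stdSimplex hK hs (hwt s hs))
    (injOn_Icc_of_forced A hA0) htrack
  intro t ht
  have hK' : (1 : ℝ) ≤ K := by exact_mod_cast hK
  have ht' : 1 ≤ √t := Real.one_le_sqrt.2 (by exact_mod_cast ht)
  refine ⟨fun a => ?_, fun a => ?_⟩
  · have hclose : |∑ s ∈ Icc 1 t, (wt s a - w' s a)| ≤ √t := abs_sum_le_sqrt fun s hs =>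
      hmix.abs_sub_le (mem_Icc.1 hs).1 (hwt s (mem_Icc.1 hs).1) a
    calc |(∑ s ∈ Icc 1 t, wt s a) - (Ncount A a t : ℝ)|
        = |∑ s ∈ Icc 1 t, (wt s a - w' s a) + deviation w' A a t| := by
          rw [deviation, sum_sub_distrib]
          ring_nf
      _ ≤ √t + K := (abs_add_le _ _).trans (add_le_add hclose (hdev t a))
      _ ≤ 2 * K * √t := by nlinarith
  · have hmass : 1 / (4 * K) * √t ≤ ∑ s ∈ Icc 1 t, w' s a := mul_sqrt_le_sum (by positivity)
      fun s hs => hmix.div_le (mem_Icc.1 hs).1 (hwt s (mem_Icc.1 hs).1) a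
    have hN := (abs_le.1 (hdev t a)).2
    rw [deviation] at hN
    rw [div_eq_mul_inv, mul_comm, ← one_div]
    linarith
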